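/- arXiv:1007.5350 — 10 statements merged into one kernel-verified Lean document; each statement's English description precedes it below -/
import Mathlib

section
/- Let n ≥ 1. There exists a permutation f of {1, 2, ..., n} such that the map i ↦ |f(i) − i| is a bijection from {1, ..., n} onto {0, 1, ..., n−1} if and only if n ≡ 0 (mod 4) or n ≡ 1 (mod 4). -/
set_option maxHeartbeats 2000000

/-- Explicit Toeplitz-queens permutation (from Rosa's graceful labeling of cycles). -/
def tq (n x : ℕ) : ℕ :=
  if x ≤ n / 4 then n + 1 - x
  else if x < 2 * (n / 4) + n % 4 then n - x
  else if x = 2 * (n / 4) + n % 4 then 1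
  else if x < 3 * (n / 4) + n % 4 then n + 1 - x
  else if x = 3 * (n / 4) + n % 4 then x
  else n + 2 - x

lemma tq_ncard_Icc (n : ℕ) : (Set.Icc 1 n).ncard = n := by
  rw [← Finset.coe_Icc, Set.ncard_coe_finset, Nat.card_Icc]
  omega

lemma tq_ncard_Ico (n : ℕ) : (Set.Ico 0 n).ncard = n := by
  rw [← Finset.coe_Ico, Set.ncard_coe_finset, Nat.card_Ico]
  omega

lemma tq_bijOn_of_mapsTo_injOn {f : ℕ → ℕ} {s t : Set ℕ} (ht : t.Finite)
    (hm : Set.MapsTo f s t) (hi : Set.InjOn f s) (hc : t.ncard ≤ s.ncard) :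
    Set.BijOn f s t := by
  refine ⟨hm, hi, ?_⟩
  have h1 : f '' s ⊆ t := Set.image_subset_iff.mpr hm
  have h2 : t.ncard ≤ (f '' s).ncard := by
    rw [Set.ncard_image_of_injOn hi]; exact hc
  have h3 : f '' s = t := Set.eq_of_subset_of_ncard_le h1 h2 ht
  rw [Set.SurjOn, h3]

/-- For `n ≥ 1`, there is a permutation `f` of `{1, …, n}` such that
`i ↦ |f i - i|` is a bijection from `{1, …, n}` onto `{0, …, n-1}`
if and only if `n ≡ 0` or `1 (mod 4)`. -/
theorem toeplitz_queens_solvable_iff (n : ℕ) (hn : 1 ≤ n) :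
    (∃ f : ℕ → ℕ, Set.BijOn f (Set.Icc 1 n) (Set.Icc 1 n) ∧
      Set.BijOn (fun i => Nat.dist (f i) i) (Set.Icc 1 n) (Set.Ico 0 n)) ↔
    n % 4 = 0 ∨ n % 4 = 1 := by
  constructor
  · rintro ⟨f, hf, hd⟩
    -- sum of values equals sum of positions
    have hsum1 : ∑ i ∈ Finset.Icc 1 n, f i = ∑ i ∈ Finset.Icc 1 n, i := by
      refine Finset.sum_bij (fun a _ => f a) ?_ ?_ ?_ ?_
      · intro a ha
        exact Finset.mem_Icc.mpr (Set.mem_Icc.mp (hf.mapsTo (Set.mem_Icc.mpr (Finset.mem_Icc.mp ha))))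
      · intro a ha b hb hab
        exact hf.injOn (Set.mem_Icc.mpr (Finset.mem_Icc.mp ha))
          (Set.mem_Icc.mpr (Finset.mem_Icc.mp hb)) hab
      · intro b hb
        obtain ⟨a, ha, rfl⟩ := hf.surjOn (Set.mem_Icc.mpr (Finset.mem_Icc.mp hb))
        exact ⟨a, Finset.mem_Icc.mpr (Set.mem_Icc.mp ha), rfl⟩
      · intro a _; rfl
    -- sum of distances equals 0 + 1 + ... + (n-1)
    have hsum2 : ∑ i ∈ Finset.Icc 1 n, Nat.dist (f i) i = ∑ j ∈ Finset.range n, j := by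
      refine Finset.sum_bij (fun a _ => Nat.dist (f a) a) ?_ ?_ ?_ ?_
      · intro a ha
        have := hd.mapsTo (Set.mem_Icc.mpr (Finset.mem_Icc.mp ha))
        simp only [Set.mem_Ico] at this
        simpa using this.2
      · intro a ha b hb hab
        exact hd.injOn (Set.mem_Icc.mpr (Finset.mem_Icc.mp ha))
          (Set.mem_Icc.mpr (Finset.mem_Icc.mp hb)) hab
      · intro b hb
        have hb' : b ∈ Set.Ico 0 n := Set.mem_Ico.mpr ⟨Nat.zero_le _, Finset.mem_range.mp hb⟩
        obtain ⟨a, ha, hab⟩ := hd.surjOn hb'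
        exact ⟨a, Finset.mem_Icc.mpr (Set.mem_Icc.mp ha), hab⟩
      · intro a _; rfl
    -- the Gauss sum is even
    have hpar : (∑ j ∈ Finset.range n, j) % 2 = 0 := by
      rw [← hsum2, Finset.sum_nat_mod]
      have hcongr : ∀ i ∈ Finset.Icc 1 n, Nat.dist (f i) i % 2 = (f i + i) % 2 := by
        intro i _
        unfold Nat.dist
        omega
      rw [Finset.sum_congr rfl hcongr, ← Finset.sum_nat_mod, Finset.sum_add_distrib, hsum1,
        ← two_mul, Nat.mul_mod_right]
    have hg : (∑ j ∈ Finset.range n, j) * 2 = n * (n - 1) := Finset.sum_range_id_mul_two n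
    -- hence 4 ∣ n * (n-1)
    by_contra hcon
    push_neg at hcon
    have h23 : n % 4 = 2 ∨ n % 4 = 3 := by omega
    have h4 : 4 ∣ n * (n - 1) := by
      obtain ⟨k, hk⟩ := Nat.dvd_of_mod_eq_zero hpar
      rw [← hg, hk]
      ring_nf
      omega
    rcases h23 with h2 | h3
    · obtain ⟨q, rfl⟩ : ∃ q, n = 4 * q + 2 := ⟨n / 4, by omega⟩
      have he : (4 * q + 2) * (4 * q + 2 - 1) = 4 * (4 * (q * q) + 3 * q) + 2 := by
        have : 4 * q + 2 - 1 = 4 * q + 1 := by omega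
        rw [this]; ring
      rw [he] at h4
      omega
    · obtain ⟨q, rfl⟩ : ∃ q, n = 4 * q + 3 := ⟨n / 4, by omega⟩
      have he : (4 * q + 3) * (4 * q + 3 - 1) = 4 * (4 * (q * q) + 5 * q + 1) + 2 := by
        have : 4 * q + 3 - 1 = 4 * q + 2 := by omega
        rw [this]; ring
      rw [he] at h4
      omega
  · intro h
    refine ⟨tq n, ?_, ?_⟩
    · have hm : Set.MapsTo (tq n) (Set.Icc 1 n) (Set.Icc 1 n) := by
        intro x hx
        simp only [Set.mem_Icc] at hx ⊢
        unfold tq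
        split_ifs <;> omega
      have hi : Set.InjOn (tq n) (Set.Icc 1 n) := by
        intro x hx y hy hxy
        simp only [Set.mem_Icc] at hx hy
        unfold tq at hxy
        split_ifs at hxy <;> omega
      exact ((Set.finite_Icc 1 n).injOn_iff_bijOn_of_mapsTo hm).mp hi
    · refine tq_bijOn_of_mapsTo_injOn (Set.finite_Ico 0 n) ?_ ?_ ?_
      · intro x hx
        simp only [Set.mem_Icc] at hx
        simp only [Set.mem_Ico]
        unfold tq Nat.dist
        split_ifs <;> omega
      · intro x hx y hy hxy
        simp only [Set.mem_Icc] at hx hy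
        simp only at hxy
        unfold tq Nat.dist at hxy
        split_ifs at hxy <;> omega
      · rw [tq_ncard_Icc, tq_ncard_Ico]
end

section
/- If n ≡ 2 (mod 4), then there exists no permutation f of {1, 2, ..., n} such that the map i ↦ |f(i) − i| is a bijection from {1, ..., n} onto {0, 1, ..., n−1}. -/
/-- If `n ≡ 2 (mod 4)`, then there is no permutation `f` of `{1, …, n}` such that
`i ↦ |f i - i|` is a bijection from `{1, …, n}` onto `{0, …, n-1}`. -/
theorem no_toeplitz_solution_of_mod_four_eq_two (n : ℕ) (hn : n % 4 = 2) :
    ¬ ∃ f : ℕ → ℕ, Set.BijOn f (Set.Icc 1 n) (Set.Icc 1 n) ∧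
      Set.BijOn (fun i => Nat.dist (f i) i) (Set.Icc 1 n) (Set.Ico 0 n) := by
  rintro ⟨f, hf, hd⟩
  -- sum of distances equals sum of 0..n-1
  have hA : ∑ a ∈ Finset.Icc 1 n, Nat.dist (f a) a = ∑ d ∈ Finset.Ico 0 n, d := by
    refine Finset.sum_bij (fun a _ => Nat.dist (f a) a) ?_ ?_ ?_ (fun a _ => rfl)
    · intro a ha
      have := hd.mapsTo (by simpa [Set.mem_Icc] using Finset.mem_Icc.mp ha)
      simpa [Finset.mem_Ico, Set.mem_Ico] using this
    · intro a₁ ha₁ a₂ ha₂ h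
      exact hd.injOn (by simpa [Set.mem_Icc] using Finset.mem_Icc.mp ha₁)
        (by simpa [Set.mem_Icc] using Finset.mem_Icc.mp ha₂) h
    · intro b hb
      obtain ⟨a, ha, hab⟩ := hd.surjOn (by simpa [Set.mem_Ico] using Finset.mem_Ico.mp hb)
      exact ⟨a, Finset.mem_Icc.mpr (by simpa [Set.mem_Icc] using ha), hab⟩
  -- sum of f over Icc equals sum of identity
  have hB : ∑ a ∈ Finset.Icc 1 n, f a = ∑ a ∈ Finset.Icc 1 n, a := by
    refine Finset.sum_bij (fun a _ => f a) ?_ ?_ ?_ (fun a _ => rfl)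
    · intro a ha
      have := hf.mapsTo (by simpa [Set.mem_Icc] using Finset.mem_Icc.mp ha)
      simpa [Finset.mem_Icc, Set.mem_Icc] using this
    · intro a₁ ha₁ a₂ ha₂ h
      exact hf.injOn (by simpa [Set.mem_Icc] using Finset.mem_Icc.mp ha₁)
        (by simpa [Set.mem_Icc] using Finset.mem_Icc.mp ha₂) h
    · intro b hb
      obtain ⟨a, ha, hab⟩ := hf.surjOn (by simpa [Set.mem_Icc] using Finset.mem_Icc.mp hb)
      exact ⟨a, Finset.mem_Icc.mpr (by simpa [Set.mem_Icc] using ha), hab⟩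
  -- parity: dist ≡ sum mod 2
  have hpar : (∑ a ∈ Finset.Icc 1 n, Nat.dist (f a) a) % 2
      = (∑ a ∈ Finset.Icc 1 n, (f a + a)) % 2 := by
    rw [Finset.sum_nat_mod, Finset.sum_nat_mod (Finset.Icc 1 n) 2 (fun a => f a + a)]
    congr 1
    refine Finset.sum_congr rfl fun a _ => ?_
    have : Nat.dist (f a) a = (f a - a) + (a - f a) := rfl
    omega
  have hsum : ∑ a ∈ Finset.Icc 1 n, (f a + a) = 2 * ∑ a ∈ Finset.Icc 1 n, a := by
    rw [Finset.sum_add_distrib, hB]; ring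
  have hgauss : (∑ d ∈ Finset.Ico 0 n, d) * 2 = n * (n - 1) := by
    rw [← Finset.range_eq_Ico]
    exact Finset.sum_range_id_mul_two n
  -- conclude
  rw [hA, hsum] at hpar
  have h2 : (∑ d ∈ Finset.Ico 0 n, d) % 2 = 0 := by omega
  obtain ⟨k, rfl⟩ : ∃ k, n = 4 * k + 2 := ⟨n / 4, by omega⟩
  have hmul : (4 * k + 2) * ((4 * k + 2) - 1) = 4 * (4 * k * k + 3 * k) + 2 := by
    have : (4 * k + 2) - 1 = 4 * k + 1 := by omega
    rw [this]; ring
  omega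
end

section
/- If n ≡ 3 (mod 4), then there exists no permutation f of {1, 2, ..., n} such that the map i ↦ |f(i) − i| is a bijection from {1, ..., n} onto {0, 1, ..., n−1}. -/
lemma dist_cast_zmod2 (a b : ℕ) : ((Nat.dist a b : ℕ) : ZMod 2) = (a : ZMod 2) + b := by
  rcases le_total a b with h | h
  · rw [Nat.dist_eq_sub_of_le h, Nat.cast_sub h, CharTwo.sub_eq_add, add_comm]
  · rw [Nat.dist_eq_sub_of_le_right h, Nat.cast_sub h, CharTwo.sub_eq_add]

/-- If `n ≡ 3 (mod 4)`, then there is no permutation `f` of `{1, …, n}` such that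
`i ↦ |f i - i|` is a bijection from `{1, …, n}` onto `{0, …, n-1}`. -/
theorem no_toeplitz_solution_of_mod_four_eq_three (n : ℕ) (hn : n % 4 = 3) :
    ¬ ∃ f : ℕ → ℕ, Set.BijOn f (Set.Icc 1 n) (Set.Icc 1 n) ∧
      Set.BijOn (fun i => Nat.dist (f i) i) (Set.Icc 1 n) (Set.Ico 0 n) := by
  rintro ⟨f, hf, hd⟩
  -- translate BijOn to finsets
  have hIcc : (Finset.Icc 1 n : Set ℕ) = Set.Icc 1 n := Finset.coe_Icc 1 n
  have hIco : (Finset.range n : Set ℕ) = Set.Ico 0 n := by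
    rw [Finset.coe_range]; ext x; simp
  -- sum of distances equals sum over range n
  have hsum1 : ∑ i ∈ Finset.Icc 1 n, Nat.dist (f i) i = ∑ k ∈ Finset.range n, k := by
    apply Finset.sum_nbij (fun i => Nat.dist (f i) i)
    · intro a ha
      have := hd.mapsTo (by rw [← hIcc]; exact_mod_cast ha)
      simpa using this.2
    · intro a ha b hb
      exact hd.injOn (by rw [← hIcc]; exact_mod_cast ha) (by rw [← hIcc]; exact_mod_cast hb)
    · rw [hIcc, hIco]; exact hd.surjOn
    · intros; rfl
  -- sum of f i equals sum of i
  have hsum2 : ∑ i ∈ Finset.Icc 1 n, f i = ∑ i ∈ Finset.Icc 1 n, i := by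
    apply Finset.sum_nbij f
    · intro a ha
      have := hf.mapsTo (by rw [← hIcc]; exact_mod_cast ha)
      rw [← hIcc] at this; exact_mod_cast this
    · intro a ha b hb
      exact hf.injOn (by rw [← hIcc]; exact_mod_cast ha) (by rw [← hIcc]; exact_mod_cast hb)
    · rw [hIcc]; exact hf.surjOn
    · intros; rfl
  -- S := gauss sum is odd
  obtain ⟨m, rfl⟩ : ∃ m, n = 4 * m + 3 := ⟨n / 4, by omega⟩
  set n := 4 * m + 3 with hn'
  have hS2 : (∑ k ∈ Finset.range n, k) * 2 = n * (n - 1) := Finset.sum_range_id_mul_two n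
  have hodd : Odd (∑ k ∈ Finset.range n, k) := by
    have hval : (∑ k ∈ Finset.range n, k) = 8 * m ^ 2 + 10 * m + 3 := by
      have hnn : n * (n - 1) = (8 * m ^ 2 + 10 * m + 3) * 2 := by
        simp only [hn']
        rw [show 4 * m + 3 - 1 = 4 * m + 2 from by omega]; ring
      omega
    exact ⟨4 * m ^ 2 + 5 * m + 1, by omega⟩
  -- cast to ZMod 2
  have h2 : ((∑ k ∈ Finset.range n, k : ℕ) : ZMod 2) = 1 := by
    rw [Nat.odd_iff] at hodd
    rw [← ZMod.natCast_mod, hodd]; rfl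
  have h0 : ((∑ i ∈ Finset.Icc 1 n, Nat.dist (f i) i : ℕ) : ZMod 2) = 0 := by
    push_cast
    calc (∑ i ∈ Finset.Icc 1 n, ((Nat.dist (f i) i : ℕ) : ZMod 2))
        = ∑ i ∈ Finset.Icc 1 n, ((f i : ZMod 2) + i) := by
          exact Finset.sum_congr rfl fun i _ => dist_cast_zmod2 _ _
      _ = (∑ i ∈ Finset.Icc 1 n, (f i : ZMod 2)) + ∑ i ∈ Finset.Icc 1 n, (i : ZMod 2) := by
          rw [Finset.sum_add_distrib]
      _ = 2 * ∑ i ∈ Finset.Icc 1 n, (i : ZMod 2) := by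
          rw [← Nat.cast_sum, hsum2, Nat.cast_sum]; ring
      _ = 0 := by
          rw [show (2 : ZMod 2) = 0 from rfl, zero_mul]
  rw [hsum1, h2] at h0
  exact one_ne_zero h0
end

section
/- If n ≥ 1 and n ≡ 0 (mod 4) or n ≡ 1 (mod 4), then there exists a permutation f of {1, 2, ..., n} such that the map i ↦ |f(i) − i| is a bijection from {1, ..., n} onto {0, 1, ..., n−1}. -/
set_option maxHeartbeats 1000000

private lemma bijOn_helper {f : ℕ → ℕ} {s t : Set ℕ}
    (ht : t.Finite) (hmaps : Set.MapsTo f s t) (hinj : Set.InjOn f s)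
    (hcard : t.ncard ≤ s.ncard) : Set.BijOn f s t := by
  refine ⟨hmaps, hinj, ?_⟩
  have himg : f '' s ⊆ t := Set.image_subset_iff.mpr hmaps
  have : f '' s = t := by
    apply Set.eq_of_subset_of_ncard_le himg _ ht
    rw [Set.ncard_image_of_injOn hinj]
    exact hcard
  exact this.symm.subset

private lemma ncard_Icc (a b : ℕ) : (Set.Icc a b).ncard = b + 1 - a := by
  rw [← Finset.coe_Icc, Set.ncard_coe_finset, Nat.card_Icc]

private lemma ncard_Ico (a b : ℕ) : (Set.Ico a b).ncard = b - a := by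
  rw [← Finset.coe_Ico, Set.ncard_coe_finset, Nat.card_Ico]

/-- If `n ≥ 1` and `n ≡ 0` or `1 (mod 4)`, then there is a permutation `f` of `{1, …, n}`
such that `i ↦ |f i - i|` is a bijection from `{1, …, n}` onto `{0, …, n-1}`. -/
theorem toeplitz_solution_exists_of_mod_four (n : ℕ) (hn : 1 ≤ n)
    (h : n % 4 = 0 ∨ n % 4 = 1) :
    ∃ f : ℕ → ℕ, Set.BijOn f (Set.Icc 1 n) (Set.Icc 1 n) ∧
      Set.BijOn (fun i => Nat.dist (f i) i) (Set.Icc 1 n) (Set.Ico 0 n) := by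
  have hdist : ∀ a b : ℕ, Nat.dist a b = a - b + (b - a) := fun a b => rfl
  rcases h with h | h
  · -- n = 4 * m, m ≥ 1
    obtain ⟨m, rfl⟩ : ∃ m, n = 4 * m := ⟨n / 4, by omega⟩
    have hm : 1 ≤ m := by omega
    refine ⟨fun i => if i ≤ m then 4*m+1-i else if i ≤ 2*m-1 then 4*m-i
      else if i = 2*m then 1 else if i ≤ 3*m-1 then 4*m+1-i
      else if i = 3*m then 3*m else 4*m+2-i, ?_, ?_⟩
    · apply bijOn_helper (Set.finite_Icc _ _)
      · intro i hi
        simp only [Set.mem_Icc] at hi ⊢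
        split_ifs <;> omega
      · intro i hi j hj hij
        simp only [Set.mem_Icc] at hi hj
        dsimp only at hij
        split_ifs at hij <;> omega
      · simp only [ncard_Icc]
        omega
    · apply bijOn_helper (Set.finite_Ico _ _)
      · intro i hi
        simp only [Set.mem_Icc] at hi
        dsimp only
        simp only [Set.mem_Ico, hdist]
        split_ifs <;> omega
      · intro i hi j hj hij
        simp only [Set.mem_Icc] at hi hj
        dsimp only at hij
        simp only [hdist] at hij
        split_ifs at hij <;> omega
      · simp only [ncard_Icc, ncard_Ico]
        omega
  · -- n = 4 * m + 1
    obtain ⟨m, rfl⟩ : ∃ m, n = 4 * m + 1 := ⟨n / 4, by omega⟩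
    refine ⟨fun i => if i ≤ m then 4*m+1-i else if i = m+1 then m+1
      else if i ≤ 2*m then 4*m+2-i else if i = 2*m+1 then 4*m+1
      else if i ≤ 3*m+1 then 4*m+3-i else 4*m+2-i, ?_, ?_⟩
    · apply bijOn_helper (Set.finite_Icc _ _)
      · intro i hi
        simp only [Set.mem_Icc] at hi ⊢
        split_ifs <;> omega
      · intro i hi j hj hij
        simp only [Set.mem_Icc] at hi hj
        dsimp only at hij
        split_ifs at hij <;> omega
      · simp only [ncard_Icc]
        omega
    · apply bijOn_helper (Set.finite_Ico _ _)
      · intro i hi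
        simp only [Set.mem_Icc] at hi
        dsimp only
        simp only [Set.mem_Ico, hdist]
        split_ifs <;> omega
      · intro i hi j hj hij
        simp only [Set.mem_Icc] at hi hj
        dsimp only at hij
        simp only [hdist] at hij
        split_ifs at hij <;> omega
      · simp only [ncard_Icc, ncard_Ico]
        omega
end

section
/- Let n ≥ 1 and suppose there exists a permutation f of {1, 2, ..., n} such that the map i ↦ |f(i) − i| is a bijection from {1, ..., n} onto {0, 1, ..., n−1}. Then 12 divides n(2n² + 9n + 1). -/
/-- If `n ≥ 1` and there is a permutation `f` of `{1, …, n}` such that `i ↦ |f i - i|` is a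
bijection from `{1, …, n}` onto `{0, …, n-1}`, then `12 ∣ n (2n² + 9n + 1)`. -/
theorem twelve_dvd_of_toeplitz_solution (n : ℕ) (hn : 1 ≤ n)
    (h : ∃ f : ℕ → ℕ, Set.BijOn f (Set.Icc 1 n) (Set.Icc 1 n) ∧
      Set.BijOn (fun i => Nat.dist (f i) i) (Set.Icc 1 n) (Set.Ico 0 n)) :
    12 ∣ n * (2 * n ^ 2 + 9 * n + 1) := by
  obtain ⟨f, hf, hd⟩ := h
  set s : Finset ℕ := Finset.Icc 1 n with hs
  have hmem : ∀ a, a ∈ s ↔ a ∈ Set.Icc 1 n := by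
    intro a; simp [hs, Set.mem_Icc]
  have hsumf : ∑ i ∈ s, f i = ∑ i ∈ s, i := by
    apply Finset.sum_bij (fun a _ => f a)
    · intro a ha; exact (hmem _).mpr (hf.mapsTo ((hmem _).mp ha))
    · intro a ha b hb hab; exact hf.injOn ((hmem _).mp ha) ((hmem _).mp hb) hab
    · intro b hb
      obtain ⟨a, ha, hab⟩ := hf.surjOn ((hmem _).mp hb)
      exact ⟨a, (hmem _).mpr ha, hab⟩
    · intro a ha; rfl
  have hsumd : ∑ i ∈ s, Nat.dist (f i) i = ∑ j ∈ Finset.range n, j := by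
    apply Finset.sum_bij (fun a _ => Nat.dist (f a) a)
    · intro a ha
      have := hd.mapsTo ((hmem _).mp ha)
      simpa [Finset.mem_range] using this.2
    · intro a ha b hb hab; exact hd.injOn ((hmem _).mp ha) ((hmem _).mp hb) hab
    · intro b hb
      obtain ⟨a, ha, hab⟩ := hd.surjOn (show b ∈ Set.Ico 0 n by
        simpa using Finset.mem_range.mp hb)
      exact ⟨a, (hmem _).mpr ha, hab⟩
    · intro a ha; rfl
  have hpar : ∀ i, Nat.dist (f i) i % 2 = (f i + i) % 2 := by
    intro i
    have : Nat.dist (f i) i = f i - i + (i - f i) := rfl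
    omega
  have heven : (∑ j ∈ Finset.range n, j) % 2 = 0 := by
    calc (∑ j ∈ Finset.range n, j) % 2
        = (∑ i ∈ s, Nat.dist (f i) i) % 2 := by rw [hsumd]
      _ = (∑ i ∈ s, Nat.dist (f i) i % 2) % 2 := Finset.sum_nat_mod _ _ _
      _ = (∑ i ∈ s, (f i + i) % 2) % 2 := by simp_rw [hpar]
      _ = (∑ i ∈ s, (f i + i)) % 2 := (Finset.sum_nat_mod _ _ _).symm
      _ = (∑ i ∈ s, f i + ∑ i ∈ s, i) % 2 := by rw [Finset.sum_add_distrib]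
      _ = (2 * ∑ i ∈ s, i) % 2 := by rw [hsumf]; ring_nf
      _ = 0 := by omega
  obtain ⟨k, hk⟩ : 2 ∣ ∑ j ∈ Finset.range n, j := Nat.dvd_of_mod_eq_zero heven
  have hgauss : (∑ j ∈ Finset.range n, j) * 2 = n * (n - 1) :=
    Finset.sum_range_id_mul_two n
  have h4 : n * (n - 1) = 4 * k := by omega
  have hr : n % 4 = 0 ∨ n % 4 = 1 := by
    rcases (by omega : n % 4 = 0 ∨ n % 4 = 1 ∨ n % 4 = 2 ∨ n % 4 = 3) with h0 | h1 | h2 | h3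
    · exact Or.inl h0
    · exact Or.inr h1
    · exfalso
      have hm : n * (n - 1) % 4 = 2 := by
        rw [Nat.mul_mod]
        have h' : (n - 1) % 4 = 1 := by omega
        rw [h2, h']
      rw [h4] at hm; omega
    · exfalso
      have hm : n * (n - 1) % 4 = 2 := by
        rw [Nat.mul_mod]
        have h' : (n - 1) % 4 = 2 := by omega
        rw [h3, h']
      rw [h4] at hm; omega
  have hmod12 : n ≡ n % 12 [MOD 12] := (Nat.mod_modEq n 12).symm
  have hcong : n * (2 * n ^ 2 + 9 * n + 1) ≡
      (n % 12) * (2 * (n % 12) ^ 2 + 9 * (n % 12) + 1) [MOD 12] :=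
    hmod12.mul ((((hmod12.pow 2).mul_left 2).add (hmod12.mul_left 9)).add_right 1)
  have hr12 : n % 12 = 0 ∨ n % 12 = 1 ∨ n % 12 = 4 ∨ n % 12 = 5 ∨ n % 12 = 8 ∨ n % 12 = 9 := by
    omega
  have hz : (n % 12) * (2 * (n % 12) ^ 2 + 9 * (n % 12) + 1) % 12 = 0 := by
    rcases hr12 with h | h | h | h | h | h <;> rw [h] <;> norm_num
  have hfin : n * (2 * n ^ 2 + 9 * n + 1) % 12 = 0 := by
    have h' := hcong
    unfold Nat.ModEq at h'
    omega
  exact Nat.dvd_of_mod_eq_zero hfin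
end

section
/- Let n ≥ 1 and let f be a permutation of {1, 2, ..., n} such that the map i ↦ |f(i) − i| is a bijection from {1, ..., n} onto {0, 1, ..., n−1}. Then 12 · (∑_{i=1}^{n} i·f(i)) = 2n(n+1)(2n+1) − (n−1)n(2n−1). -/
private lemma dist_sq_cast (a b : ℕ) : ((Nat.dist a b : ℤ))^2 = ((a:ℤ) - b)^2 := by
  rcases le_total a b with h | h
  · rw [Nat.dist_eq_sub_of_le h]
    have : (((b - a : ℕ)) : ℤ) = (b:ℤ) - a := by
      push_cast [h]; ring
    rw [this]; ring
  · rw [Nat.dist_eq_sub_of_le_right h]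
    have : (((a - b : ℕ)) : ℤ) = (a:ℤ) - b := by
      push_cast [h]; ring
    rw [this]

private lemma six_sq (n : ℕ) : 6 * ∑ i ∈ Finset.range n, (i:ℤ)^2 = n*(n-1)*(2*n-1) := by
  induction n with
  | zero => simp
  | succ k ih =>
    rw [Finset.sum_range_succ, mul_add, ih]
    push_cast
    ring

/-- If `n ≥ 1` and `f` is a permutation of `{1, …, n}` such that `i ↦ |f i - i|` is a
bijection from `{1, …, n}` onto `{0, …, n-1}`, then
`12 ∑ i f(i) = 2n(n+1)(2n+1) - (n-1)n(2n-1)`. -/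
theorem twelve_mul_sum_of_toeplitz_solution (n : ℕ) (hn : 1 ≤ n) (f : ℕ → ℕ)
    (hf : Set.BijOn f (Set.Icc 1 n) (Set.Icc 1 n))
    (hd : Set.BijOn (fun i => Nat.dist (f i) i) (Set.Icc 1 n) (Set.Ico 0 n)) :
    (12 : ℤ) * ∑ i ∈ Finset.Icc 1 n, (i : ℤ) * (f i : ℤ) =
      2 * n * (n + 1) * (2 * n + 1) - (n - 1) * n * (2 * n - 1) := by
  have hmem : ∀ a : ℕ, a ∈ Finset.Icc 1 n ↔ a ∈ Set.Icc 1 n := by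
    intro a; simp [Finset.mem_Icc, Set.mem_Icc]
  -- sum of (f i)^2 equals sum of i^2
  have h1 : ∑ i ∈ Finset.Icc 1 n, ((f i : ℤ))^2 = ∑ i ∈ Finset.Icc 1 n, (i:ℤ)^2 := by
    apply Finset.sum_bij (fun a _ => f a)
    · intro a ha; exact (hmem (f a)).2 (hf.mapsTo ((hmem a).1 ha))
    · intro a ha b hb hab
      exact hf.injOn ((hmem a).1 ha) ((hmem b).1 hb) hab
    · intro b hb
      obtain ⟨a, ha, hfa⟩ := hf.surjOn ((hmem b).1 hb)
      exact ⟨a, (hmem a).2 ha, hfa⟩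
    · intro a _; rfl
  -- sum of (f i - i)^2 equals sum of k^2 over range n
  have h2 : ∑ i ∈ Finset.Icc 1 n, ((f i : ℤ) - i)^2 = ∑ k ∈ Finset.range n, (k:ℤ)^2 := by
    apply Finset.sum_bij (fun a _ => Nat.dist (f a) a)
    · intro a ha
      have := hd.mapsTo ((hmem a).1 ha)
      simpa [Finset.mem_range] using this
    · intro a ha b hb hab
      exact hd.injOn ((hmem a).1 ha) ((hmem b).1 hb) hab
    · intro b hb
      have hb' : b ∈ Set.Ico 0 n := by simpa [Set.mem_Ico] using Finset.mem_range.1 hb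
      obtain ⟨a, ha, hfa⟩ := hd.surjOn hb'
      exact ⟨a, (hmem a).2 ha, hfa⟩
    · intro a _
      exact (dist_sq_cast (f a) a).symm
  have h3 : ∑ i ∈ Finset.Icc 1 n, (i:ℤ)^2 = ∑ i ∈ Finset.range (n+1), (i:ℤ)^2 := by
    rw [Finset.range_eq_Ico]
    rw [show Finset.Ico 0 (n+1) = insert 0 (Finset.Icc 1 n) by
      ext x; simp [Finset.mem_Ico, Finset.mem_Icc, Nat.lt_succ_iff]; omega]
    simp
  have key : ∑ i ∈ Finset.Icc 1 n, ((f i : ℤ) - i)^2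
      = ∑ i ∈ Finset.Icc 1 n, ((f i : ℤ))^2 + ∑ i ∈ Finset.Icc 1 n, (i:ℤ)^2
        - 2 * ∑ i ∈ Finset.Icc 1 n, (i : ℤ) * (f i : ℤ) := by
    rw [← Finset.sum_add_distrib, Finset.mul_sum, ← Finset.sum_sub_distrib]
    apply Finset.sum_congr rfl
    intro i _; ring
  have e1 := six_sq n
  have e2 := six_sq (n+1)
  rw [h2, h1, h3] at key
  push_cast at e2
  linarith
end

section
/- Let n ≥ 2. There exists a permutation f of {1, 2, ..., n} such that i ↦ |f(i) − i| is a bijection from {1, ..., n} onto {0, 1, ..., n−1} if and only if there exists a bijection g from {1, 2, ..., n−1} onto {2, 3, ..., n} such that i ↦ |g(i) − i| is a bijection from {1, ..., n−1} onto {0, 1, ..., n−2}. -/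
private lemma refl_bij (n : ℕ) : Set.BijOn (fun i => n + 1 - i) (Set.Icc 1 n) (Set.Icc 1 n) := by
  refine ⟨?_, ?_, ?_⟩
  · intro i hi; simp only [Set.mem_Icc] at *; omega
  · intro a ha b hb h; simp only [Set.mem_Icc] at *; omega
  · intro y hy; simp only [Set.mem_Icc] at hy
    exact ⟨n + 1 - y, by simp only [Set.mem_Icc]; omega, by simp; omega⟩

private def extFun (g : ℕ → ℕ) (n : ℕ) : ℕ → ℕ := fun i => if i = n then 1 else g i

@[simp] private lemma extFun_self (g : ℕ → ℕ) (n : ℕ) : extFun g n n = 1 := by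
  simp [extFun]

private lemma extFun_ne (g : ℕ → ℕ) {i n : ℕ} (h : i ≠ n) : extFun g n i = g i := by
  simp [extFun, h]

private lemma aux_restrict (n : ℕ) (hn : 2 ≤ n) (f : ℕ → ℕ)
    (hf : Set.BijOn f (Set.Icc 1 n) (Set.Icc 1 n))
    (hd : Set.BijOn (fun i => Nat.dist (f i) i) (Set.Icc 1 n) (Set.Ico 0 n))
    (hfn : f n = 1) :
    ∃ g : ℕ → ℕ, Set.BijOn g (Set.Icc 1 (n - 1)) (Set.Icc 2 n) ∧
      Set.BijOn (fun i => Nat.dist (g i) i) (Set.Icc 1 (n - 1)) (Set.Ico 0 (n - 1)) := by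
  have hsub : Set.Icc 1 (n - 1) ⊆ Set.Icc 1 n := by
    intro i hi; simp only [Set.mem_Icc] at *; omega
  have hnmem : n ∈ Set.Icc 1 n := by simp only [Set.mem_Icc]; omega
  have hdn : Nat.dist (f n) n = n - 1 := by simp [hfn, Nat.dist]; omega
  refine ⟨f, ⟨?_, hf.2.1.mono hsub, ?_⟩, ⟨?_, hd.2.1.mono hsub, ?_⟩⟩
  · intro i hi
    have hi' := hsub hi
    have h1 := hf.1 hi'
    have hne : f i ≠ 1 := by
      intro h
      have := hf.2.1 hi' hnmem (by rw [h, hfn])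
      simp only [Set.mem_Icc] at hi; omega
    simp only [Set.mem_Icc] at *; omega
  · intro y hy
    simp only [Set.mem_Icc] at hy
    obtain ⟨i, hi, hfi⟩ := hf.2.2 (show y ∈ Set.Icc 1 n by simp only [Set.mem_Icc]; omega)
    refine ⟨i, ?_, hfi⟩
    have : i ≠ n := by intro h; rw [h, hfn] at hfi; omega
    simp only [Set.mem_Icc] at *; omega
  · intro i hi
    have hi' := hsub hi
    have h1 := hd.1 hi'
    have hne : Nat.dist (f i) i ≠ n - 1 := by
      intro h
      have := hd.2.1 hi' hnmem (by simp only [h, hdn])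
      simp only [Set.mem_Icc] at hi; omega
    simp only [Set.mem_Ico] at *; omega
  · intro y hy
    simp only [Set.mem_Ico] at hy
    obtain ⟨i, hi, hfi⟩ := hd.2.2 (show y ∈ Set.Ico 0 n by simp only [Set.mem_Ico]; omega)
    refine ⟨i, ?_, hfi⟩
    have : i ≠ n := by
      intro h; rw [h] at hfi; simp only at hfi; rw [hdn] at hfi; omega
    simp only [Set.mem_Icc] at *; omega

/-- For `n ≥ 2`, the matrix `Tₙ` is solvable iff `Tₙ*` is: there is a permutation `f` of
`{1, …, n}` with `i ↦ |f i - i|` a bijection onto `{0, …, n-1}` iff there is a bijection `g`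
from `{1, …, n-1}` onto `{2, …, n}` with `i ↦ |g i - i|` a bijection onto `{0, …, n-2}`. -/
theorem toeplitz_solvable_iff_star_solvable (n : ℕ) (hn : 2 ≤ n) :
    (∃ f : ℕ → ℕ, Set.BijOn f (Set.Icc 1 n) (Set.Icc 1 n) ∧
      Set.BijOn (fun i => Nat.dist (f i) i) (Set.Icc 1 n) (Set.Ico 0 n)) ↔
    (∃ g : ℕ → ℕ, Set.BijOn g (Set.Icc 1 (n - 1)) (Set.Icc 2 n) ∧
      Set.BijOn (fun i => Nat.dist (g i) i) (Set.Icc 1 (n - 1)) (Set.Ico 0 (n - 1))) := by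
  constructor
  · rintro ⟨f, hf, hd⟩
    -- find the element with distance n-1
    obtain ⟨k, hk, hdk⟩ := hd.2.2 (show n - 1 ∈ Set.Ico 0 n by simp only [Set.mem_Ico]; omega)
    have hfk := hf.1 hk
    simp only [Set.mem_Icc] at hfk hk
    simp only [Nat.dist] at hdk
    have hcase : (k = n ∧ f k = 1) ∨ (k = 1 ∧ f k = n) := by omega
    rcases hcase with ⟨hk1, hk2⟩ | ⟨hk1, hk2⟩
    · exact aux_restrict n hn f hf hd (hk1 ▸ hk2)
    · -- reflect
      set f' : ℕ → ℕ := fun i => n + 1 - f (n + 1 - i) with hf'def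
      have hr := refl_bij n
      have hbij' : Set.BijOn f' (Set.Icc 1 n) (Set.Icc 1 n) := by
        have := (hr.comp hf).comp hr
        refine this.congr ?_
        intro i hi; rfl
      have hd' : Set.BijOn (fun i => Nat.dist (f' i) i) (Set.Icc 1 n) (Set.Ico 0 n) := by
        have := hd.comp hr
        refine this.congr ?_
        intro i hi
        have hri : n + 1 - i ∈ Set.Icc 1 n := hr.1 hi
        have haf := hf.1 hri
        simp only [Set.mem_Icc] at hi haf
        simp only [Function.comp, hf'def, Nat.dist]
        omega
      have hfn' : f' n = 1 := by
        subst hk1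
        simp only [hf'def]
        have h2 : n + 1 - n = 1 := by omega
        rw [h2, hk2]; omega
      exact aux_restrict n hn f' hbij' hd' hfn'
  · rintro ⟨g, hg, hd⟩
    refine ⟨extFun g n, ?_, ?_⟩
    · refine ⟨?_, ?_, ?_⟩
      · intro i hi
        simp only [Set.mem_Icc] at hi
        by_cases h : i = n
        · simp only [h, extFun_self]; simp only [Set.mem_Icc]; omega
        · simp only [extFun_ne g h]
          have := hg.1 (show i ∈ Set.Icc 1 (n-1) by simp only [Set.mem_Icc]; omega)
          simp only [Set.mem_Icc] at this ⊢; omega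
      · intro a ha b hb hab
        simp only [Set.mem_Icc] at ha hb
        by_cases h1 : a = n <;> by_cases h2 : b = n
        · omega
        · exfalso
          simp only [h1, extFun_self, extFun_ne g h2] at hab
          have := hg.1 (show b ∈ Set.Icc 1 (n-1) by simp only [Set.mem_Icc]; omega)
          simp only [Set.mem_Icc] at this; omega
        · exfalso
          simp only [h2, extFun_self, extFun_ne g h1] at hab
          have := hg.1 (show a ∈ Set.Icc 1 (n-1) by simp only [Set.mem_Icc]; omega)
          simp only [Set.mem_Icc] at this; omega
        · simp only [extFun_ne g h1, extFun_ne g h2] at hab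
          exact hg.2.1 (show a ∈ Set.Icc 1 (n-1) by simp only [Set.mem_Icc]; omega)
            (show b ∈ Set.Icc 1 (n-1) by simp only [Set.mem_Icc]; omega) hab
      · intro y hy
        simp only [Set.mem_Icc] at hy
        by_cases h : y = 1
        · exact ⟨n, by simp only [Set.mem_Icc]; omega, by rw [extFun_self, h]⟩
        · obtain ⟨i, hi, hgi⟩ := hg.2.2 (show y ∈ Set.Icc 2 n by simp only [Set.mem_Icc]; omega)
          simp only [Set.mem_Icc] at hi
          refine ⟨i, by simp only [Set.mem_Icc]; omega, ?_⟩
          rw [extFun_ne g (show i ≠ n by omega)]; exact hgi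
    · refine ⟨?_, ?_, ?_⟩
      · intro i hi
        simp only [Set.mem_Icc] at hi
        by_cases h : i = n
        · simp only [h, extFun_self]
          simp only [Set.mem_Ico, Nat.dist]; omega
        · simp only [extFun_ne g h]
          have := hd.1 (show i ∈ Set.Icc 1 (n-1) by simp only [Set.mem_Icc]; omega)
          simp only [Set.mem_Ico] at this ⊢; omega
      · intro a ha b hb hab
        simp only [Set.mem_Icc] at ha hb
        simp only at hab
        by_cases h1 : a = n <;> by_cases h2 : b = n
        · omega
        · exfalso
          simp only [h1, extFun_self, extFun_ne g h2] at hab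
          have := hd.1 (show b ∈ Set.Icc 1 (n-1) by simp only [Set.mem_Icc]; omega)
          simp only [Set.mem_Ico, Nat.dist] at this hab; omega
        · exfalso
          simp only [h2, extFun_self, extFun_ne g h1] at hab
          have := hd.1 (show a ∈ Set.Icc 1 (n-1) by simp only [Set.mem_Icc]; omega)
          simp only [Set.mem_Ico, Nat.dist] at this hab; omega
        · simp only [extFun_ne g h1, extFun_ne g h2] at hab
          exact hd.2.1 (show a ∈ Set.Icc 1 (n-1) by simp only [Set.mem_Icc]; omega)
            (show b ∈ Set.Icc 1 (n-1) by simp only [Set.mem_Icc]; omega) hab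
      · intro y hy
        simp only [Set.mem_Ico] at hy
        by_cases h : y = n - 1
        · refine ⟨n, by simp only [Set.mem_Icc]; omega, ?_⟩
          simp only [extFun_self, Nat.dist, h]; omega
        · obtain ⟨i, hi, hgi⟩ := hd.2.2 (show y ∈ Set.Ico 0 (n-1) by simp only [Set.mem_Ico]; omega)
          simp only [Set.mem_Icc] at hi
          refine ⟨i, by simp only [Set.mem_Icc]; omega, ?_⟩
          simp only [extFun_ne g (show i ≠ n by omega)]
          exact hgi
end

section
/- Let n ≥ 1. There exists a set S of n squares (i, j) with 1 ≤ i, j ≤ n such that the n first coordinates are pairwise distinct, the n second coordinates are pairwise distinct, and the n values |i − j| are pairwise distinct, if and only if n ≡ 0 (mod 4) or n ≡ 1 (mod 4). -/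
/-- An explicit placement function: row `i` gets a queen in column `queenCol n i`. -/
def queenCol (n i : ℕ) : ℕ :=
  if n % 4 = 0 then
    if i = 1 then 2*(n/4)+1
    else if i ≤ n/4 then n+2-i
    else if i ≤ 2*(n/4)-1 then n+1-i
    else if i ≤ 3*(n/4)-1 then n-i
    else if i = 3*(n/4) then 3*(n/4)+1
    else n+1-i
  else
    if i = 1 then n
    else if i = n then 2*(n/4)+1
    else if i ≤ n/4 then n+1-i
    else if i ≤ 2*(n/4)-1 then n-i
    else if i ≤ 3*(n/4)-1 then n-1-i
    else if i = 3*(n/4) then 3*(n/4)+1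
    else n-i

lemma queenCol_range (n i : ℕ) (h4 : n % 4 = 0 ∨ n % 4 = 1)
    (h1 : 1 ≤ i) (h2 : i ≤ n) : 1 ≤ queenCol n i ∧ queenCol n i ≤ n := by
  unfold queenCol
  split_ifs <;> omega

set_option maxHeartbeats 2000000 in
lemma queenCol_inj (n i j : ℕ) (h4 : n % 4 = 0 ∨ n % 4 = 1)
    (hi1 : 1 ≤ i) (hi2 : i ≤ n) (hj1 : 1 ≤ j) (hj2 : j ≤ n)
    (h : queenCol n i = queenCol n j) : i = j := by
  rcases h4 with h4 | h4 <;>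
    simp only [queenCol, h4, reduceIte] at h <;>
    split_ifs at h <;> first | omega | contradiction

set_option maxHeartbeats 4000000 in
lemma queenCol_dist (n i j : ℕ) (h4 : n % 4 = 0 ∨ n % 4 = 1)
    (hi1 : 1 ≤ i) (hi2 : i ≤ n) (hj1 : 1 ≤ j) (hj2 : j ≤ n)
    (h : Nat.dist i (queenCol n i) = Nat.dist j (queenCol n j)) : i = j := by
  rcases h4 with h4 | h4 <;>
    simp only [queenCol, Nat.dist, h4, reduceIte] at h <;>
    split_ifs at h <;> first | omega | contradiction

lemma dist_mod_two (a b : ℕ) : Nat.dist a b % 2 = (a + b) % 2 := by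
  unfold Nat.dist; omega

/-- For `n ≥ 1`, there exist `n` squares on the `n × n` board with pairwise distinct rows,
pairwise distinct columns, and pairwise distinct values `|i - j|`, iff
`n ≡ 0` or `1 (mod 4)`. -/
theorem n_nonattacking_queens_iff (n : ℕ) (hn : 1 ≤ n) :
    (∃ S : Finset (ℕ × ℕ), S.card = n ∧
      (∀ p ∈ S, 1 ≤ p.1 ∧ p.1 ≤ n ∧ 1 ≤ p.2 ∧ p.2 ≤ n) ∧
      Set.InjOn Prod.fst (S : Set (ℕ × ℕ)) ∧ Set.InjOn Prod.snd (S : Set (ℕ × ℕ)) ∧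
      Set.InjOn (fun p : ℕ × ℕ => Nat.dist p.1 p.2) (S : Set (ℕ × ℕ))) ↔
    n % 4 = 0 ∨ n % 4 = 1 := by
  constructor
  · rintro ⟨S, hcard, hbound, hfst, hsnd, hdist⟩
    -- the rows are exactly 1..n
    have hfst' : ∀ x ∈ S, ∀ y ∈ S, x.1 = y.1 → x = y := by
      intro x hx y hy h
      exact hfst (Finset.mem_coe.2 hx) (Finset.mem_coe.2 hy) h
    have hsnd' : ∀ x ∈ S, ∀ y ∈ S, x.2 = y.2 → x = y := by
      intro x hx y hy h
      exact hsnd (Finset.mem_coe.2 hx) (Finset.mem_coe.2 hy) h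
    have hdist' : ∀ x ∈ S, ∀ y ∈ S,
        Nat.dist x.1 x.2 = Nat.dist y.1 y.2 → x = y := by
      intro x hx y hy h
      exact hdist (Finset.mem_coe.2 hx) (Finset.mem_coe.2 hy) h
    have hA : S.image Prod.fst = Finset.Icc 1 n := by
      apply Finset.eq_of_subset_of_card_le
      · intro x hx
        obtain ⟨p, hp, rfl⟩ := Finset.mem_image.1 hx
        have := hbound p hp
        exact Finset.mem_Icc.2 ⟨this.1, this.2.1⟩
      · rw [Finset.card_image_of_injOn hfst, hcard, Nat.card_Icc]
        omega
    have hB : S.image Prod.snd = Finset.Icc 1 n := by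
      apply Finset.eq_of_subset_of_card_le
      · intro x hx
        obtain ⟨p, hp, rfl⟩ := Finset.mem_image.1 hx
        have := hbound p hp
        exact Finset.mem_Icc.2 ⟨this.2.2.1, this.2.2.2⟩
      · rw [Finset.card_image_of_injOn hsnd, hcard, Nat.card_Icc]
        omega
    have hD : S.image (fun p : ℕ × ℕ => Nat.dist p.1 p.2) = Finset.range n := by
      apply Finset.eq_of_subset_of_card_le
      · intro x hx
        obtain ⟨p, hp, rfl⟩ := Finset.mem_image.1 hx
        have := hbound p hp
        have : Nat.dist p.1 p.2 < n := by
          unfold Nat.dist; omega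
        exact Finset.mem_range.2 this
      · rw [Finset.card_image_of_injOn hdist, hcard, Finset.card_range]
    -- sums
    have h1 : ∑ p ∈ S, p.1 = ∑ x ∈ Finset.Icc 1 n, x := by
      rw [← hA, Finset.sum_image hfst']
    have h2 : ∑ p ∈ S, p.2 = ∑ x ∈ Finset.Icc 1 n, x := by
      rw [← hB, Finset.sum_image hsnd']
    have h3 : ∑ p ∈ S, Nat.dist p.1 p.2 = ∑ x ∈ Finset.range n, x := by
      rw [← hD, Finset.sum_image hdist']
    -- parity
    have hpar : (∑ x ∈ Finset.range n, x) % 2 = 0 := by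
      rw [← h3, Finset.sum_nat_mod]
      have : ∑ p ∈ S, Nat.dist p.1 p.2 % 2 = ∑ p ∈ S, (p.1 + p.2) % 2 :=
        Finset.sum_congr rfl fun p _ => dist_mod_two p.1 p.2
      rw [this, ← Finset.sum_nat_mod, Finset.sum_add_distrib, h1, h2]
      omega
    have hg := Finset.sum_range_id_mul_two n
    by_contra hcon
    have hr : n % 4 = 2 ∨ n % 4 = 3 := by omega
    rcases hr with hr | hr
    · obtain ⟨k, rfl⟩ : ∃ k, n = 4*k+2 := ⟨n/4, by omega⟩
      have he : (4*k+2) * (4*k+2-1) = 2*(8*(k*k)+6*k+1) := by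
        have : 4*k+2-1 = 4*k+1 := by omega
        rw [this]; ring
      rw [he] at hg
      generalize k*k = m at hg
      omega
    · obtain ⟨k, rfl⟩ : ∃ k, n = 4*k+3 := ⟨n/4, by omega⟩
      have he : (4*k+3) * (4*k+3-1) = 2*(8*(k*k)+10*k+3) := by
        have : 4*k+3-1 = 4*k+2 := by omega
        rw [this]; ring
      rw [he] at hg
      generalize k*k = m at hg
      omega
  · intro h4
    refine ⟨(Finset.Icc 1 n).image (fun i => (i, queenCol n i)), ?_, ?_, ?_, ?_, ?_⟩
    · rw [Finset.card_image_of_injective _ (fun a b h => by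
        simpa using congrArg Prod.fst h), Nat.card_Icc]
      omega
    · intro p hp
      obtain ⟨i, hi, rfl⟩ := Finset.mem_image.1 hp
      rw [Finset.mem_Icc] at hi
      have := queenCol_range n i h4 hi.1 hi.2
      exact ⟨hi.1, hi.2, this.1, this.2⟩
    · intro x hx y hy h
      obtain ⟨i, hi, rfl⟩ := Finset.mem_image.1 (Finset.mem_coe.1 hx)
      obtain ⟨j, hj, rfl⟩ := Finset.mem_image.1 (Finset.mem_coe.1 hy)
      simp only at h
      subst h; rfl
    · intro x hx y hy h
      obtain ⟨i, hi, rfl⟩ := Finset.mem_image.1 (Finset.mem_coe.1 hx)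
      obtain ⟨j, hj, rfl⟩ := Finset.mem_image.1 (Finset.mem_coe.1 hy)
      rw [Finset.mem_Icc] at hi hj
      simp only at h
      have := queenCol_inj n i j h4 hi.1 hi.2 hj.1 hj.2 h
      subst this; rfl
    · intro x hx y hy h
      obtain ⟨i, hi, rfl⟩ := Finset.mem_image.1 (Finset.mem_coe.1 hx)
      obtain ⟨j, hj, rfl⟩ := Finset.mem_image.1 (Finset.mem_coe.1 hy)
      rw [Finset.mem_Icc] at hi hj
      simp only at h
      have := queenCol_dist n i j h4 hi.1 hi.2 hj.1 hj.2 h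
      subst this; rfl
end

section
/- For every n ≥ 1, there exists a set S of n−1 squares (i, j) with 1 ≤ i, j ≤ n such that the first coordinates of the squares in S are pairwise distinct, the second coordinates are pairwise distinct, and the values |i − j| are pairwise distinct. -/
/-- For every `n ≥ 1`, there exist `n - 1` squares on the `n × n` board with pairwise
distinct rows, pairwise distinct columns, and pairwise distinct values `|i - j|`. -/
theorem n_sub_one_nonattacking_queens (n : ℕ) (hn : 1 ≤ n) :
    ∃ S : Finset (ℕ × ℕ), S.card = n - 1 ∧
      (∀ p ∈ S, 1 ≤ p.1 ∧ p.1 ≤ n ∧ 1 ≤ p.2 ∧ p.2 ≤ n) ∧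
      Set.InjOn Prod.fst (S : Set (ℕ × ℕ)) ∧ Set.InjOn Prod.snd (S : Set (ℕ × ℕ)) ∧
      Set.InjOn (fun p : ℕ × ℕ => Nat.dist p.1 p.2) (S : Set (ℕ × ℕ)) := by
  set g : ℕ → ℕ × ℕ := fun k =>
    if k % 2 = 0 then (k / 2 + 1, n - k / 2) else (n - (k + 1) / 2, (k + 1) / 2) with hg
  have ge : ∀ s, g (2 * s) = (s + 1, n - s) := by
    intro s
    have h1 : 2 * s % 2 = 0 := by omega
    have h2 : 2 * s / 2 = s := by omega
    simp [hg, h1, h2]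
  have go : ∀ s, g (2 * s + 1) = (n - (s + 1), s + 1) := by
    intro s
    have h1 : (2 * s + 1) % 2 = 1 := by omega
    have h2 : (2 * s + 1 + 1) / 2 = s + 1 := by omega
    simp [hg, h1, h2]
  have key : ∀ a < n - 1, ∀ b < n - 1,
      ((g a).1 = (g b).1 ∨ (g a).2 = (g b).2 ∨
        Nat.dist (g a).1 (g a).2 = Nat.dist (g b).1 (g b).2) → a = b := by
    intro a ha b hb h
    obtain ⟨s, hs⟩ : ∃ s, a = 2 * s ∨ a = 2 * s + 1 := ⟨a / 2, by omega⟩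
    obtain ⟨t, ht⟩ : ∃ t, b = 2 * t ∨ b = 2 * t + 1 := ⟨b / 2, by omega⟩
    rcases hs with rfl | rfl <;> rcases ht with rfl | rfl <;>
      simp only [ge, go, Nat.dist] at h <;> omega
  refine ⟨(Finset.range (n - 1)).image g, ?_, ?_, ?_, ?_, ?_⟩
  · rw [Finset.card_image_of_injOn, Finset.card_range]
    intro a ha b hb hab
    exact key a (Finset.mem_range.mp ha) b (Finset.mem_range.mp hb)
      (Or.inl (by rw [hab]))
  · intro p hp
    simp only [Finset.mem_image, Finset.mem_range] at hp
    obtain ⟨k, hk, rfl⟩ := hp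
    obtain ⟨s, hs⟩ : ∃ s, k = 2 * s ∨ k = 2 * s + 1 := ⟨k / 2, by omega⟩
    rcases hs with rfl | rfl <;> simp only [ge, go] <;> omega
  · intro p hp q hq hpq
    simp only [Finset.coe_image, Finset.coe_range, Set.mem_image, Set.mem_Iio] at hp hq
    obtain ⟨a, ha, rfl⟩ := hp
    obtain ⟨b, hb, rfl⟩ := hq
    rw [key a ha b hb (Or.inl hpq)]
  · intro p hp q hq hpq
    simp only [Finset.coe_image, Finset.coe_range, Set.mem_image, Set.mem_Iio] at hp hq
    obtain ⟨a, ha, rfl⟩ := hp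
    obtain ⟨b, hb, rfl⟩ := hq
    rw [key a ha b hb (Or.inr (Or.inl hpq))]
  · intro p hp q hq hpq
    simp only [Finset.coe_image, Finset.coe_range, Set.mem_image, Set.mem_Iio] at hp hq
    obtain ⟨a, ha, rfl⟩ := hp
    obtain ⟨b, hb, rfl⟩ := hq
    rw [key a ha b hb (Or.inr (Or.inr hpq))]
end

section
/- Let n ≥ 2 and let S = {(1,1)} ∪ {(n+1−i, i+1) : 1 ≤ i ≤ ⌈n/2⌉ − 1} ∪ {(j, n+3−j) : 3 ≤ j ≤ ⌊n/2⌋ + 1}. Then S consists of exactly n−1 squares of the n × n board, the first coordinates of the squares in S are pairwise distinct, the second coordinates are pairwise distinct, and the values |i − j| over (i, j) ∈ S are pairwise distinct; moreover, the row not used is row 2, the column not used is column ⌈n/2⌉ + 1, and the value |i − j| not attained is n − 1. -/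
/-- For `n ≥ 2`, the explicit placement
`S = {(1,1)} ∪ {(n+1-i, i+1) : 1 ≤ i ≤ ⌈n/2⌉ - 1} ∪ {(j, n+3-j) : 3 ≤ j ≤ ⌊n/2⌋ + 1}`
consists of `n - 1` squares of the board, with pairwise distinct rows, columns and values
`|i - j|`; the missing row is `2`, the missing column is `⌈n/2⌉ + 1`, and the missing value
is `n - 1`.  (Here `⌈n/2⌉ = (n+1)/2` and `⌊n/2⌋ = n/2` in natural-number arithmetic.) -/
theorem explicit_n_sub_one_placement (n : ℕ) (hn : 2 ≤ n)
    (S : Finset (ℕ × ℕ))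
    (hS : S = {(1, 1)} ∪
      (Finset.Icc 1 ((n + 1) / 2 - 1)).image (fun i => (n + 1 - i, i + 1)) ∪
      (Finset.Icc 3 (n / 2 + 1)).image (fun j => (j, n + 3 - j))) :
    S.card = n - 1 ∧
    (∀ p ∈ S, 1 ≤ p.1 ∧ p.1 ≤ n ∧ 1 ≤ p.2 ∧ p.2 ≤ n) ∧
    Set.InjOn Prod.fst (S : Set (ℕ × ℕ)) ∧ Set.InjOn Prod.snd (S : Set (ℕ × ℕ)) ∧
    Set.InjOn (fun p : ℕ × ℕ => Nat.dist p.1 p.2) (S : Set (ℕ × ℕ)) ∧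
    S.image Prod.fst = Finset.Icc 1 n \ {2} ∧
    S.image Prod.snd = Finset.Icc 1 n \ {(n + 1) / 2 + 1} ∧
    S.image (fun p : ℕ × ℕ => Nat.dist p.1 p.2) = Finset.Ico 0 n \ {n - 1} := by
  have hmem : ∀ p : ℕ × ℕ, p ∈ S ↔
      p = (1,1) ∨ (∃ i, (1 ≤ i ∧ i ≤ (n+1)/2 - 1) ∧ p = (n+1-i, i+1)) ∨
      (∃ j, (3 ≤ j ∧ j ≤ n/2 + 1) ∧ p = (j, n+3-j)) := by
    intro p
    simp only [hS, Finset.mem_union, Finset.mem_singleton, Finset.mem_image, Finset.mem_Icc,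
      eq_comm, or_assoc]
  have hbounds : ∀ p ∈ S, 1 ≤ p.1 ∧ p.1 ≤ n ∧ 1 ≤ p.2 ∧ p.2 ≤ n := by
    intro p hp
    rw [hmem] at hp
    rcases hp with rfl | ⟨i, hi, rfl⟩ | ⟨j, hj, rfl⟩ <;> simp <;> omega
  have hfst : Set.InjOn Prod.fst (S : Set (ℕ × ℕ)) := by
    intro p hp q hq h
    rw [Finset.mem_coe, hmem] at hp hq
    rcases hp with rfl | ⟨i, hi, rfl⟩ | ⟨j, hj, rfl⟩ <;>
      rcases hq with rfl | ⟨i', hi', rfl⟩ | ⟨j', hj', rfl⟩ <;>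
      simp only [Prod.mk.injEq] at h ⊢ <;> omega
  have hsnd : Set.InjOn Prod.snd (S : Set (ℕ × ℕ)) := by
    intro p hp q hq h
    rw [Finset.mem_coe, hmem] at hp hq
    rcases hp with rfl | ⟨i, hi, rfl⟩ | ⟨j, hj, rfl⟩ <;>
      rcases hq with rfl | ⟨i', hi', rfl⟩ | ⟨j', hj', rfl⟩ <;>
      simp only [Prod.mk.injEq] at h ⊢ <;> omega
  have hdist : Set.InjOn (fun p : ℕ × ℕ => Nat.dist p.1 p.2) (S : Set (ℕ × ℕ)) := by
    intro p hp q hq h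
    rw [Finset.mem_coe, hmem] at hp hq
    rcases hp with rfl | ⟨i, hi, rfl⟩ | ⟨j, hj, rfl⟩ <;>
      rcases hq with rfl | ⟨i', hi', rfl⟩ | ⟨j', hj', rfl⟩ <;>
      simp only [Nat.dist, Prod.mk.injEq] at h ⊢ <;> omega
  have himgfst : S.image Prod.fst = Finset.Icc 1 n \ {2} := by
    ext a
    simp only [Finset.mem_image, Finset.mem_sdiff, Finset.mem_Icc, Finset.mem_singleton]
    constructor
    · rintro ⟨p, hp, rfl⟩
      rw [hmem] at hp
      rcases hp with rfl | ⟨i, hi, rfl⟩ | ⟨j, hj, rfl⟩ <;> simp <;> omega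
    · rintro ⟨⟨h1, h2⟩, h3⟩
      rcases Nat.lt_or_ge a 2 with h | h
      · exact ⟨(1,1), (hmem _).2 (Or.inl rfl), by omega⟩
      rcases le_or_gt a (n/2+1) with h' | h'
      · exact ⟨(a, n+3-a), (hmem _).2 (Or.inr (Or.inr ⟨a, ⟨by omega, h'⟩, rfl⟩)), rfl⟩
      · refine ⟨(n+1-(n+1-a), (n+1-a)+1), (hmem _).2 (Or.inr (Or.inl ⟨n+1-a, ⟨by omega, by omega⟩, rfl⟩)), by simp; omega⟩
  have himgsnd : S.image Prod.snd = Finset.Icc 1 n \ {(n + 1) / 2 + 1} := by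
    ext a
    simp only [Finset.mem_image, Finset.mem_sdiff, Finset.mem_Icc, Finset.mem_singleton]
    constructor
    · rintro ⟨p, hp, rfl⟩
      rw [hmem] at hp
      rcases hp with rfl | ⟨i, hi, rfl⟩ | ⟨j, hj, rfl⟩ <;> simp <;> omega
    · rintro ⟨⟨h1, h2⟩, h3⟩
      rcases Nat.lt_or_ge a 2 with h | h
      · exact ⟨(1,1), (hmem _).2 (Or.inl rfl), by omega⟩
      rcases le_or_gt a ((n+1)/2) with h' | h'
      · exact ⟨(n+1-(a-1), (a-1)+1), (hmem _).2 (Or.inr (Or.inl ⟨a-1, ⟨by omega, by omega⟩, rfl⟩)), by simp; omega⟩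
      · exact ⟨(n+3-a, n+3-(n+3-a)), (hmem _).2 (Or.inr (Or.inr ⟨n+3-a, ⟨by omega, by omega⟩, rfl⟩)), by simp; omega⟩
  have himgdist : S.image (fun p : ℕ × ℕ => Nat.dist p.1 p.2) = Finset.Ico 0 n \ {n - 1} := by
    ext a
    simp only [Finset.mem_image, Finset.mem_sdiff, Finset.mem_Ico, Finset.mem_singleton]
    constructor
    · rintro ⟨p, hp, rfl⟩
      rw [hmem] at hp
      rcases hp with rfl | ⟨i, hi, rfl⟩ | ⟨j, hj, rfl⟩ <;> simp [Nat.dist] <;> omega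
    · rintro ⟨⟨h1, h2⟩, h3⟩
      rcases Nat.eq_zero_or_pos a with rfl | ha
      · exact ⟨(1,1), (hmem _).2 (Or.inl rfl), by simp [Nat.dist]⟩
      rcases Nat.even_or_odd (n - a) with ⟨k, hk⟩ | ⟨k, hk⟩
      · refine ⟨(n+1-(n-a)/2, (n-a)/2+1),
          (hmem _).2 (Or.inr (Or.inl ⟨(n-a)/2, ⟨by omega, by omega⟩, rfl⟩)), ?_⟩
        simp only [Nat.dist]
        omega
      · refine ⟨((n+3-a)/2, n+3-(n+3-a)/2),
          (hmem _).2 (Or.inr (Or.inr ⟨(n+3-a)/2, ⟨by omega, by omega⟩, rfl⟩)), ?_⟩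
        simp only [Nat.dist]
        omega
  have hcard : S.card = n - 1 := by
    have := Finset.card_image_of_injOn hfst
    rw [himgfst] at this
    rw [← this, Finset.card_sdiff_of_subset (by simp; omega), Nat.card_Icc, Finset.card_singleton]
    omega
  exact ⟨hcard, hbounds, hfst, hsnd, hdist, himgfst, himgsnd, himgdist⟩
end
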